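/- arXiv:2306.16720 — 4 statements merged into one kernel-verified Lean document; each statement's English description precedes it below -/
import Mathlib

section
/- Let t ∈ (0,1] and m ≥ 1. Then the integral of the modified Chebyshev polynomial P_{2m}^{(t)} against the semicircle distribution of radius 2√t satisfies ∫_{−2√t}^{2√t} P_{2m}^{(t)}(x) · (1/(2πt)) √(4t − x²) dx = −t if m = 1, and = 0 if m ≥ 2. -/
open Polynomial Real intervalIntegral

/-- The modified Chebyshev polynomials: `P₀ = 2`, `P₁ = X`,
`P_{k+2} = X·P_{k+1} − t·P_k`. -/
noncomputable def modCheb (t : ℝ) : ℕ → Polynomial ℝ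
  | 0 => 2
  | 1 => Polynomial.X
  | (k + 2) => Polynomial.X * modCheb t (k + 1) - Polynomial.C t * modCheb t k

/-!
`P_k^{(s²)}(s y) = s^k C_k(y)` with `C_k` the Vieta–Lucas polynomials, so
`P_k^{(t)}(2√t cos θ) = 2 t^{k/2} cos kθ`. The substitution `x = 2√t cos θ` turns the
semicircle law into `(2/π) sin²θ dθ` on `[0, π]`, and the integral becomes
`(4 t^m / π) ∫₀^π cos 2mθ sin²θ dθ`. Since `cos aθ sin²θ` is a combination of
`cos aθ` and `cos (a ± 2)θ`, only the constant term `cos (2m - 2)θ` survives, and only for `m = 1`.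
-/

theorem modCheb_sq_eval_mul (s x : ℝ) (n : ℕ) :
    (modCheb (s ^ 2) n).eval (s * x) = s ^ n * (Chebyshev.C ℝ n).eval x := by
  induction n using Nat.twoStepInduction with
  | zero => simp [modCheb]
  | one => simp [modCheb]
  | more n ih₀ ih₁ =>
    rw [modCheb, show ((n + 2 : ℕ) : ℤ) = n + 2 by push_cast; ring, Chebyshev.C_add_two]
    simp only [eval_sub, eval_mul, eval_X, eval_C, ih₀, Nat.cast_succ] at ih₁ ⊢
    rw [ih₁]
    ring

theorem modCheb_eval_two_mul_sqrt_mul_cos {t : ℝ} (ht : 0 ≤ t) (n : ℕ) (θ : ℝ) :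
    (modCheb t n).eval (2 * √t * cos θ) = 2 * √t ^ n * cos (n * θ) := by
  have h := modCheb_sq_eval_mul (√t) (2 * cos θ) n
  rw [sq_sqrt ht, Chebyshev.C_two_mul_real_cos, Int.cast_natCast] at h
  rw [mul_comm 2, mul_assoc, h]
  ring

theorem integral_neg_self_eq_integral_comp_mul_cos {g : ℝ → ℝ} (hg : Continuous g) (r : ℝ) :
    ∫ x in -r..r, g x = ∫ θ in (0 : ℝ)..π, g (r * cos θ) * (r * sin θ) := by
  have hderiv : ∀ θ ∈ Set.uIcc π 0, HasDerivAt (fun θ => r * cos θ) (-(r * sin θ)) θ :=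
    fun θ _ => by simpa using (hasDerivAt_cos θ).const_mul r
  have h := integral_comp_mul_deriv hderiv (by fun_prop) hg
  simp only [Function.comp_def, cos_pi, cos_zero, mul_neg, mul_one] at h
  rw [← h, integral_symm, ← integral_neg]
  simp only [neg_neg]

theorem integral_mul_sqrt_sq_sub_sq {f : ℝ → ℝ} (hf : Continuous f) {r : ℝ} (hr : 0 ≤ r) :
    ∫ x in -r..r, f x * √(r ^ 2 - x ^ 2) = ∫ θ in (0 : ℝ)..π, f (r * cos θ) * (r * sin θ) ^ 2 := by
  rw [integral_neg_self_eq_integral_comp_mul_cos (by fun_prop)]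
  refine integral_congr fun θ hθ => ?_
  rw [Set.uIcc_of_le pi_pos.le] at hθ
  have hsin : 0 ≤ r * sin θ := mul_nonneg hr (sin_nonneg_of_nonneg_of_le_pi hθ.1 hθ.2)
  have hsq : r ^ 2 - (r * cos θ) ^ 2 = (r * sin θ) ^ 2 := by
    linear_combination -r ^ 2 * sin_sq_add_cos_sq θ
  simp only [hsq, sqrt_sq hsin]
  ring

theorem integral_cos_int_mul (k : ℤ) :
    ∫ θ in (0 : ℝ)..π, cos (k * θ) = if k = 0 then π else 0 := by
  split_ifs with hk
  · simp [hk]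
  · have hk' : (k : ℝ) ≠ 0 := Int.cast_ne_zero.mpr hk
    rw [integral_comp_mul_left (fun x => cos x) hk', mul_zero, integral_cos, sin_int_mul_pi,
      sin_zero, sub_zero, smul_zero]

theorem cos_mul_mul_sin_sq (a θ : ℝ) :
    cos (a * θ) * sin θ ^ 2
      = cos (a * θ) / 2 - cos ((a + 2) * θ) / 4 - cos ((a - 2) * θ) / 4 := by
  rw [add_mul, sub_mul, cos_add, cos_sub, cos_two_mul, sin_two_mul, sin_sq]
  ring

theorem integral_cos_nat_mul_mul_sin_sq {n : ℕ} (hn : n ≠ 0) :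
    ∫ θ in (0 : ℝ)..π, cos (n * θ) * sin θ ^ 2 = if n = 2 then -(π / 4) else 0 := by
  have hcos (k : ℤ) (c : ℝ) :
      IntervalIntegrable (fun θ => cos (k * θ) / c) MeasureTheory.volume 0 π :=
    Continuous.intervalIntegrable (by fun_prop) _ _
  have e₁ : (n : ℝ) + 2 = ((n + 2 : ℤ) : ℝ) := by push_cast; rfl
  have e₂ : (n : ℝ) - 2 = ((n - 2 : ℤ) : ℝ) := by push_cast; rfl
  simp_rw [cos_mul_mul_sin_sq, e₁, e₂, ← Int.cast_natCast (R := ℝ) n]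
  rw [integral_sub ((hcos _ _).sub (hcos _ _)) (hcos _ _), integral_sub (hcos _ _) (hcos _ _),
    integral_div, integral_div, integral_div]
  simp only [integral_cos_int_mul]
  split_ifs <;> first | omega | ring

theorem stmt_10_general (t : ℝ) (ht0 : 0 < t) (m : ℕ) (hm : 1 ≤ m) :
    ∫ x in (-(2 * Real.sqrt t))..(2 * Real.sqrt t),
        (modCheb t (2 * m)).eval x * ((1 / (2 * π * t)) * Real.sqrt (4 * t - x ^ 2))
      = if m = 1 then -t else 0 := by
  have hsq : (2 * √t) ^ 2 = 4 * t := by rw [mul_pow, sq_sqrt ht0.le]; norm_num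
  have hpow : √t ^ (2 * m) = t ^ m := by rw [pow_mul, sq_sqrt ht0.le]
  calc _ = ∫ x in -(2 * √t)..(2 * √t),
        (1 / (2 * π * t) * (modCheb t (2 * m)).eval x) * √((2 * √t) ^ 2 - x ^ 2) := by
        simp only [hsq, mul_left_comm, mul_assoc]
    _ = ∫ θ in (0 : ℝ)..π, 4 * t ^ m / π * (cos ((2 * m : ℕ) * θ) * sin θ ^ 2) := by
        rw [integral_mul_sqrt_sq_sub_sq (by fun_prop) (by positivity)]
        congr 1 with θ
        rw [modCheb_eval_two_mul_sqrt_mul_cos ht0.le, hpow]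
        field_simp
        rw [sq_sqrt ht0.le]
        ring
    _ = if m = 1 then -t else 0 := by
        rw [integral_const_mul, integral_cos_nat_mul_mul_sin_sq (by omega)]
        rcases eq_or_ne m 1 with rfl | hm1
        · simp only [mul_one, if_true]
          field_simp
        · simp [hm1, show 2 * m ≠ 2 by omega]

/-- For `t ∈ (0,1]` and `m ≥ 1`, the integral of `P_{2m}^{(t)}` against the semicircle
distribution of radius `2√t` equals `−t` if `m = 1` and `0` if `m ≥ 2`. -/
theorem stmt_10 (t : ℝ) (ht0 : 0 < t) (ht1 : t ≤ 1) (m : ℕ) (hm : 1 ≤ m) :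
    ∫ x in (-(2 * Real.sqrt t))..(2 * Real.sqrt t),
        (modCheb t (2 * m)).eval x * ((1 / (2 * π * t)) * Real.sqrt (4 * t - x ^ 2))
      = if m = 1 then -t else 0 :=
  stmt_10_general t ht0 m hm
end

section
/- For every integer m ≥ 1 and every real t, one has Σ_{q=0}^{m} α^{(2m,t)}_{2m−2q} · t^{m−q} · C_{m−q} · (m−q+1)(m−q) = 2 m t^m, where C_j = binom(2j, j)/(j+1) is the j-th Catalan number. -/
open Polynomial

noncomputable def fibP (t : ℝ) : ℕ → Polynomial ℝ
  | 0 => 0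
  | 1 => 1
  | (k + 2) => Polynomial.X * fibP t (k + 1) - Polynomial.C t * fibP t k

noncomputable def phi (t : ℝ) (n j : ℕ) : ℝ :=
  if j + 1 ≤ n ∧ (n - 1 - j) % 2 = 0 then
    (-t) ^ ((n - 1 - j) / 2) * (Nat.choose (n - 1 - (n - 1 - j) / 2) ((n - 1 - j) / 2) : ℝ)
  else 0

lemma phi_eq (t : ℝ) {n j q : ℕ} (h : j + 2 * q + 1 = n) :
    phi t n j = (-t) ^ q * (Nat.choose (j + q) q : ℝ) := by
  unfold phi
  rw [if_pos (by omega)]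
  rw [show (n - 1 - j) / 2 = q from by omega]
  rw [show n - 1 - q = j + q from by omega]

lemma phi_eq_zero (t : ℝ) {n j : ℕ} (h : ∀ q, j + 2 * q + 1 ≠ n) :
    phi t n j = 0 := by
  unfold phi
  rw [if_neg]
  rintro ⟨h1, h2⟩
  exact h ((n - 1 - j) / 2) (by omega)

lemma fibP_coeff (t : ℝ) : ∀ n j, (fibP t n).coeff j = phi t n j
  | 0, j => by
      rw [show fibP t 0 = 0 from rfl, Polynomial.coeff_zero, phi_eq_zero t (by omega)]
  | 1, j => by
      rcases j with _ | k
      · rw [show fibP t 1 = 1 from rfl, Polynomial.coeff_one, if_pos rfl,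
          phi_eq t (show 0 + 2 * 0 + 1 = 1 from rfl)]
        simp
      · rw [show fibP t 1 = 1 from rfl, Polynomial.coeff_one,
          if_neg (Nat.succ_ne_zero k), phi_eq_zero t (by omega)]
  | (n + 2), j => by
      have h1 := fibP_coeff t (n + 1)
      have h0 := fibP_coeff t n
      have hstep : (fibP t (n+2)).coeff j
          = (if j = 0 then 0 else phi t (n+1) (j - 1)) - t * phi t n j := by
        rw [show fibP t (n+2) = Polynomial.X * fibP t (n + 1) - Polynomial.C t * fibP t n from rfl,
          Polynomial.coeff_sub, Polynomial.coeff_C_mul, h0]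
        rcases j with _ | k
        · simp [Polynomial.mul_coeff_zero]
        · rw [Polynomial.coeff_X_mul, h1, if_neg (Nat.succ_ne_zero k), Nat.add_sub_cancel]
      rw [hstep]
      rcases j with _ | k
      · rw [if_pos rfl]
        by_cases hodd : ∃ s, n = 2 * s + 1
        · obtain ⟨s, rfl⟩ := hodd
          rw [phi_eq t (n := 2*s+1) (j := 0) (q := s) (by ring),
              phi_eq t (n := 2*s+1+2) (j := 0) (q := s + 1) (by ring)]
          simp only [Nat.zero_add, Nat.choose_self, Nat.cast_one, mul_one]
          rw [pow_succ]
          ring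
        · rw [phi_eq_zero t (fun q hq => hodd ⟨q, by omega⟩),
              phi_eq_zero t (fun q hq => hodd ⟨q - 1, by omega⟩)]
          ring
      · rw [if_neg (Nat.succ_ne_zero k), Nat.add_sub_cancel]
        by_cases h : ∃ s, n = k + 2 * s
        · obtain ⟨s, rfl⟩ := h
          rcases Nat.eq_zero_or_pos s with rfl | hs0
          · rw [phi_eq t (n := k+2*0+1) (j := k) (q := 0) (by ring),
                phi_eq t (n := k+2*0+2) (j := k + 1) (q := 0) (by ring),
                phi_eq_zero t (j := k + 1) (show ∀ q, (k+1) + 2 * q + 1 ≠ k + 2 * 0 from by intro q; omega)]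
            simp
          · obtain ⟨u, rfl⟩ : ∃ u, s = u + 1 := ⟨s - 1, by omega⟩
            rw [phi_eq t (n := k+2*(u+1)+1) (j := k) (q := u + 1) (by ring),
                phi_eq t (n := k+2*(u+1)) (j := k + 1) (q := u) (by ring),
                phi_eq t (n := k+2*(u+1)+2) (j := k + 1) (q := u + 1) (by ring)]
            rw [show k + 1 + (u + 1) = (k + u + 1) + 1 from by ring,
                show k + (u + 1) = k + u + 1 from by ring,
                show k + 1 + u = k + u + 1 from by ring]
            rw [Nat.choose_succ_succ (k + u + 1) u]
            push_cast
            ring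
        · rw [phi_eq_zero t (fun q hq => h ⟨q, by omega⟩),
              phi_eq_zero t (fun q hq => h ⟨q + 1, by omega⟩),
              phi_eq_zero t (fun q hq => h ⟨q, by omega⟩)]
          ring

lemma modCheb' (t : ℝ) : ∀ k, modCheb t (k + 1) = fibP t (k + 2) - Polynomial.C t * fibP t k
  | 0 => by
      simp [modCheb, fibP]
  | 1 => by
      rw [show modCheb t 2 = Polynomial.X * modCheb t 1 - Polynomial.C t * modCheb t 0 from rfl,
          show fibP t 3 = Polynomial.X * fibP t 2 - Polynomial.C t * fibP t 1 from rfl,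
          show fibP t 2 = Polynomial.X * fibP t 1 - Polynomial.C t * fibP t 0 from rfl,
          show modCheb t 1 = Polynomial.X from rfl, show modCheb t 0 = 2 from rfl,
          show fibP t 1 = 1 from rfl, show fibP t 0 = 0 from rfl]
      ring
  | (k + 2) => by
      have e1 := modCheb' t k
      have e2 : modCheb t (k + 2) = fibP t (k + 3) - Polynomial.C t * fibP t (k + 1) :=
        modCheb' t (k + 1)
      rw [show modCheb t (k + 3) = Polynomial.X * modCheb t (k + 2) - Polynomial.C t * modCheb t (k+1) from rfl,
          e2, e1,
          show fibP t (k + 4) = Polynomial.X * fibP t (k + 3) - Polynomial.C t * fibP t (k+2) from rfl,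
          show fibP t (k + 2) = Polynomial.X * fibP t (k + 1) - Polynomial.C t * fibP t k from rfl]
      ring

/-- Even coefficients of `modCheb t (2m)`. -/
lemma modCheb_coeff (t : ℝ) (m q : ℕ) (hm : 1 ≤ m) (hq : q ≤ m) :
    (modCheb t (2 * m)).coeff (2 * m - 2 * q) =
      (-1) ^ q * t ^ q *
        ((Nat.choose (2 * m - q) q : ℝ) +
          if q = 0 then 0 else (Nat.choose (2 * m - 1 - q) (q - 1) : ℝ)) := by
  have key : modCheb t (2 * m) = fibP t (2 * m + 1) - Polynomial.C t * fibP t (2 * m - 1) := by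
    have h := modCheb' t (2 * m - 1)
    rw [show 2 * m - 1 + 1 = 2 * m from by omega, show 2 * m - 1 + 2 = 2 * m + 1 from by omega] at h
    exact h
  rw [key, Polynomial.coeff_sub, Polynomial.coeff_C_mul, fibP_coeff, fibP_coeff]
  rcases Nat.eq_zero_or_pos q with rfl | hq1
  · rw [phi_eq t (n := 2*m+1) (j := 2*m - 2*0) (q := 0) (by omega),
        phi_eq_zero t (n := 2*m-1) (j := 2*m - 2*0) (fun q' => by omega)]
    rw [show 2*m - 2*0 + 0 = 2*m - 0 from by omega]
    simp
  · obtain ⟨b, rfl⟩ : ∃ b, q = b + 1 := ⟨q - 1, by omega⟩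
    rw [phi_eq t (n := 2*m+1) (j := 2*m - 2*(b+1)) (q := b + 1) (by omega),
        phi_eq t (n := 2*m-1) (j := 2*m - 2*(b+1)) (q := b) (by omega)]
    rw [show 2*m - 2*(b+1) + (b+1) = 2*m - (b+1) from by omega,
        show 2*m - 2*(b+1) + b = 2*m - 1 - (b+1) from by omega,
        if_neg (Nat.succ_ne_zero b), Nat.add_sub_cancel]
    simp only [show (-t) = (-1 : ℝ) * t from by ring, mul_pow]
    ring

noncomputable def gP : ℕ → Polynomial ℝ
  | 0 => 0
  | 1 => 1
  | (n + 2) => (1 + Polynomial.X) * gP (n + 1) - Polynomial.X * gP n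

lemma gP_geom : ∀ n, gP (n + 1) = ∑ i ∈ Finset.range (n + 1), Polynomial.X ^ i
  | 0 => by simp [gP]
  | 1 => by
      rw [show gP 2 = (1 + Polynomial.X) * gP 1 - Polynomial.X * gP 0 from rfl,
        show gP 1 = 1 from rfl, show gP 0 = 0 from rfl]
      simp [Finset.sum_range_succ]
  | (n + 2) => by
      have e1 := gP_geom n
      have e2 := gP_geom (n + 1)
      rw [show gP (n + 3) = (1 + Polynomial.X) * gP (n + 2) - Polynomial.X * gP (n + 1) from rfl,
        e2, e1]
      simp only [Finset.sum_range_succ]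
      ring

noncomputable def gterm (n q : ℕ) : Polynomial ℝ :=
  ((-1 : ℝ) ^ q * (Nat.choose (n - q) q : ℝ)) • (Polynomial.X ^ q * (1 + Polynomial.X) ^ (n - 2 * q))

lemma gterm_eq_zero {n q : ℕ} (h : n < 2 * q) : gterm n q = 0 := by
  unfold gterm
  rw [Nat.choose_eq_zero_of_lt (by omega)]
  simp

lemma gP_binom : ∀ n, gP (n + 1) = ∑ q ∈ Finset.range (n + 1), gterm n q
  | 0 => by
      simp [gP, gterm]
  | 1 => by
      rw [show gP 2 = (1 + Polynomial.X) * gP 1 - Polynomial.X * gP 0 from rfl,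
        show gP 1 = 1 from rfl, show gP 0 = 0 from rfl]
      rw [Finset.sum_range_succ, Finset.sum_range_succ, Finset.sum_range_zero]
      unfold gterm
      norm_num
  | (n + 2) => by
      have e1 := gP_binom n
      have e2 := gP_binom (n + 1)
      rw [show gP (n + 3) = (1 + Polynomial.X) * gP (n + 2) - Polynomial.X * gP (n + 1) from rfl,
        e2, e1, Finset.mul_sum, Finset.mul_sum]
      have hA : ∀ q ∈ Finset.range (n + 2),
          (1 + Polynomial.X) * gterm (n + 1) q
            = ((-1 : ℝ) ^ q * (Nat.choose (n + 1 - q) q : ℝ)) •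
                (Polynomial.X ^ q * (1 + Polynomial.X) ^ (n + 2 - 2 * q)) := by
        intro q hq
        unfold gterm
        by_cases h : 2 * q ≤ n + 1
        · rw [show n + 2 - 2 * q = (n + 1 - 2 * q) + 1 from by omega, pow_succ]
          rw [mul_smul_comm]
          congr 1
          ring
        · rw [Nat.choose_eq_zero_of_lt (by omega)]
          simp
      have hB : ∀ q ∈ Finset.range (n + 1),
          Polynomial.X * gterm n q
            = ((-1 : ℝ) ^ q * (Nat.choose (n - q) q : ℝ)) •
                (Polynomial.X ^ (q + 1) * (1 + Polynomial.X) ^ (n + 2 - 2 * (q + 1))) := by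
        intro q hq
        unfold gterm
        rw [show n + 2 - 2 * (q + 1) = n - 2 * q from by omega]
        rw [mul_smul_comm]
        congr 1
        ring
      rw [Finset.sum_congr rfl hA, Finset.sum_congr rfl hB]
      rw [Finset.sum_range_succ' (fun q => ((-1 : ℝ) ^ q * (Nat.choose (n + 1 - q) q : ℝ)) •
            (Polynomial.X ^ q * (1 + Polynomial.X) ^ (n + 2 - 2 * q))) (n + 1)]
      rw [Finset.sum_range_succ' (fun q => gterm (n + 2) q) (n + 2)]
      rw [Finset.sum_range_succ (fun q => gterm (n + 2) (q + 1)) (n + 1)]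
      rw [show gterm (n + 2) (n + 1 + 1) = 0 from gterm_eq_zero (by omega), add_zero]
      have hsum : (∑ k ∈ Finset.range (n + 1),
            ((-1 : ℝ) ^ (k + 1) * ↑((n + 1 - (k + 1)).choose (k + 1))) •
              (Polynomial.X ^ (k + 1) * (1 + Polynomial.X) ^ (n + 2 - 2 * (k + 1))))
          - (∑ x ∈ Finset.range (n + 1),
            ((-1 : ℝ) ^ x * ↑((n - x).choose x)) •
              (Polynomial.X ^ (x + 1) * (1 + Polynomial.X) ^ (n + 2 - 2 * (x + 1))))
          = ∑ x ∈ Finset.range (n + 1), gterm (n + 2) (x + 1) := by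
        rw [← Finset.sum_sub_distrib]
        refine Finset.sum_congr rfl ?_
        intro q hq
        rw [Finset.mem_range] at hq
        unfold gterm
        rw [← sub_smul]
        congr 1
        have hnb : n - q = n + 1 - (q + 1) := by omega
        have hpascal : (Nat.choose (n + 2 - (q + 1)) (q + 1) : ℝ)
            = (Nat.choose (n + 1 - (q + 1)) (q + 1) : ℝ) + (Nat.choose (n - q) q : ℝ) := by
          rw [hnb]
          rw [show n + 2 - (q + 1) = (n + 1 - (q + 1)) + 1 from by omega]
          rw [Nat.choose_succ_succ (n + 1 - (q + 1)) q]
          push_cast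
          ring
        rw [hpascal]
        ring
      have hA0 : ((-1 : ℝ) ^ 0 * ↑((n + 1 - 0).choose 0)) •
            (Polynomial.X ^ 0 * (1 + Polynomial.X) ^ (n + 2 - 2 * 0)) = gterm (n + 2) 0 := by
        unfold gterm
        norm_num
      linear_combination hsum + hA0

lemma scalar_id (m : ℕ) (hm : 1 ≤ m) :
    ∑ q ∈ Finset.range m,
      (-1 : ℝ) ^ q * (Nat.choose (2*m - 1 - q) q : ℝ) * (Nat.choose (2*m - 1 - 2*q) (m - 1 - q) : ℝ)
      = 1 := by
  have h1 : (gP (2*m)).coeff (m - 1) = 1 := by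
    conv_lhs => rw [show 2*m = (2*m - 1) + 1 from by omega, gP_geom]
    rw [Polynomial.finset_sum_coeff]
    rw [Finset.sum_congr rfl (fun i _ => Polynomial.coeff_X_pow i (m-1))]
    rw [Finset.sum_ite_eq (Finset.range (2*m - 1 + 1)) (m-1) (fun _ => (1:ℝ))]
    rw [if_pos (Finset.mem_range.mpr (by omega))]
  have h2 : (gP (2*m)).coeff (m - 1)
      = ∑ q ∈ Finset.range (2*m - 1 + 1), (gterm (2*m - 1) q).coeff (m - 1) := by
    conv_lhs => rw [show 2*m = (2*m - 1) + 1 from by omega, gP_binom]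
    rw [Polynomial.finset_sum_coeff]
  have h3 : ∀ q, (gterm (2*m - 1) q).coeff (m - 1)
      = if q ≤ m - 1 then
          (-1 : ℝ) ^ q * (Nat.choose (2*m - 1 - q) q : ℝ) * (Nat.choose (2*m - 1 - 2*q) (m - 1 - q) : ℝ)
        else 0 := by
    intro q
    unfold gterm
    rw [Polynomial.coeff_smul, mul_comm (Polynomial.X ^ q), Polynomial.coeff_mul_X_pow']
    by_cases h : q ≤ m - 1
    · rw [if_pos h, if_pos h, Polynomial.coeff_one_add_X_pow]
      simp only [smul_eq_mul]
    · rw [if_neg h, if_neg h, smul_zero]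
  rw [h1] at h2
  rw [Finset.sum_congr rfl (fun q _ => h3 q)] at h2
  rw [← Finset.sum_subset (Finset.range_subset_range.mpr (show m ≤ 2*m - 1 + 1 from by omega))
        (fun x _ hx => by
          rw [if_neg]
          rw [Finset.mem_range] at hx
          omega)] at h2
  rw [Finset.sum_congr rfl (fun q hq => if_pos (show q ≤ m - 1 from by
        have := Finset.mem_range.mp hq; omega))] at h2
  exact h2.symm

lemma key0 (a : ℕ) :
    (a + 1) * Nat.choose (2*a + 2) (a + 1) = (2*a + 2) * Nat.choose (2*a + 1) a := by
  have h := Nat.add_one_mul_choose_eq (2*a + 1) a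
  simp only [Nat.succ_eq_add_one, show 2*a + 1 + 1 = 2*a + 2 from by omega] at h
  rw [mul_comm]
  exact h.symm

lemma keyNat (a b : ℕ) :
    (Nat.choose (b + 2*a + 3) (b + 1) + Nat.choose (b + 2*a + 2) b) *
        ((a + 1) * Nat.choose (2*a + 2) (a + 1))
      = (2 * (b + a + 2)) * (Nat.choose (b + 2*a + 2) (b + 1) * Nat.choose (2*a + 1) a) := by
  have hQ : ((Nat.choose (b + 2*a + 3) (b + 1) + Nat.choose (b + 2*a + 2) b) *
        ((a + 1) * Nat.choose (2*a + 2) (a + 1)) : ℚ)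
      = ((2 * (b + a + 2)) * (Nat.choose (b + 2*a + 2) (b + 1) * Nat.choose (2*a + 1) a) : ℚ) := by
    have e1 : ((Nat.choose (b + 2*a + 3) (b + 1) : ℕ) : ℚ)
        = (Nat.factorial (b + 2*a + 3) : ℚ) /
            ((Nat.factorial (b + 1) : ℚ) * (Nat.factorial (2*a + 2) : ℚ)) := by
      rw [Nat.cast_choose ℚ (by omega), show b + 2*a + 3 - (b + 1) = 2*a + 2 from by omega]
    have e2 : ((Nat.choose (b + 2*a + 2) b : ℕ) : ℚ)
        = (Nat.factorial (b + 2*a + 2) : ℚ) /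
            ((Nat.factorial b : ℚ) * (Nat.factorial (2*a + 2) : ℚ)) := by
      rw [Nat.cast_choose ℚ (by omega), show b + 2*a + 2 - b = 2*a + 2 from by omega]
    have e3 : ((Nat.choose (2*a + 2) (a + 1) : ℕ) : ℚ)
        = (Nat.factorial (2*a + 2) : ℚ) /
            ((Nat.factorial (a + 1) : ℚ) * (Nat.factorial (a + 1) : ℚ)) := by
      rw [Nat.cast_choose ℚ (by omega), show 2*a + 2 - (a + 1) = a + 1 from by omega]
    have e4 : ((Nat.choose (b + 2*a + 2) (b + 1) : ℕ) : ℚ)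
        = (Nat.factorial (b + 2*a + 2) : ℚ) /
            ((Nat.factorial (b + 1) : ℚ) * (Nat.factorial (2*a + 1) : ℚ)) := by
      rw [Nat.cast_choose ℚ (by omega), show b + 2*a + 2 - (b + 1) = 2*a + 1 from by omega]
    have e5 : ((Nat.choose (2*a + 1) a : ℕ) : ℚ)
        = (Nat.factorial (2*a + 1) : ℚ) /
            ((Nat.factorial a : ℚ) * (Nat.factorial (a + 1) : ℚ)) := by
      rw [Nat.cast_choose ℚ (by omega), show 2*a + 1 - a = a + 1 from by omega]
    have f1 : (Nat.factorial (b + 2*a + 3) : ℚ) = (b + 2*a + 3) * (Nat.factorial (b + 2*a + 2) : ℚ) := by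
      rw [show b + 2*a + 3 = (b + 2*a + 2) + 1 from by omega, Nat.factorial_succ]
      push_cast; ring
    have f2 : (Nat.factorial (2*a + 2) : ℚ) = (2*a + 2) * (Nat.factorial (2*a + 1) : ℚ) := by
      rw [show 2*a + 2 = (2*a + 1) + 1 from by omega, Nat.factorial_succ]
      push_cast; ring
    have f3 : (Nat.factorial (a + 1) : ℚ) = (a + 1) * (Nat.factorial a : ℚ) := by
      rw [Nat.factorial_succ]; push_cast; ring
    have f4 : (Nat.factorial (b + 1) : ℚ) = (b + 1) * (Nat.factorial b : ℚ) := by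
      rw [Nat.factorial_succ]; push_cast; ring
    push_cast
    rw [e1, e2, e3, e4, e5, f1, f2, f3, f4]
    have n1 : (Nat.factorial (b + 2*a + 2) : ℚ) ≠ 0 := Nat.cast_ne_zero.mpr (Nat.factorial_ne_zero _)
    have n2 : (Nat.factorial (2*a + 1) : ℚ) ≠ 0 := Nat.cast_ne_zero.mpr (Nat.factorial_ne_zero _)
    have n3 : (Nat.factorial a : ℚ) ≠ 0 := Nat.cast_ne_zero.mpr (Nat.factorial_ne_zero _)
    have n4 : (Nat.factorial b : ℚ) ≠ 0 := Nat.cast_ne_zero.mpr (Nat.factorial_ne_zero _)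
    have p1 : ((b : ℚ) + 1) ≠ 0 := by positivity
    have p2 : ((a : ℚ) + 1) ≠ 0 := by positivity
    have p3 : (2*(a : ℚ) + 2) ≠ 0 := by positivity
    field_simp
    ring
  exact_mod_cast hQ

lemma hcat (j : ℕ) : (catalan j : ℝ) * ((j : ℝ) + 1) = (Nat.choose (2*j) j : ℝ) := by
  have h := succ_mul_catalan_eq_centralBinom j
  have h2 : ((j + 1) * catalan j : ℕ) = Nat.choose (2*j) j := h
  have := congrArg (Nat.cast : ℕ → ℝ) h2
  push_cast at this
  linarith [this]

lemma hkeyNat (m q : ℕ) (hm : 1 ≤ m) (hq : q < m) :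
    (Nat.choose (2*m - q) q + (if q = 0 then 0 else Nat.choose (2*m - 1 - q) (q - 1))) *
        ((m - q) * Nat.choose (2*(m - q)) (m - q))
      = 2*m * (Nat.choose (2*m - 1 - q) q * Nat.choose (2*m - 1 - 2*q) (m - 1 - q)) := by
  rcases Nat.eq_zero_or_pos q with rfl | hq1
  · obtain ⟨a, rfl⟩ : ∃ a, m = a + 1 := ⟨m - 1, by omega⟩
    rw [if_pos rfl, add_zero]
    simp only [Nat.mul_zero, Nat.sub_zero]
    rw [show 2*(a+1) - 1 = 2*a + 1 from by omega,
        show (a+1) - 1 = a from by omega,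
        show 2*(a+1) = 2*a + 2 from by omega]
    rw [Nat.choose_zero_right, Nat.choose_zero_right]
    rw [one_mul, one_mul, key0 a]
  · obtain ⟨b, rfl⟩ : ∃ b, q = b + 1 := ⟨q - 1, by omega⟩
    obtain ⟨a, rfl⟩ : ∃ a, m = a + b + 2 := ⟨m - b - 2, by omega⟩
    rw [if_neg (Nat.succ_ne_zero b), Nat.add_sub_cancel]
    rw [show 2*(a+b+2) - (b+1) = b + 2*a + 3 from by omega,
        show 2*(a+b+2) - 1 - (b+1) = b + 2*a + 2 from by omega,
        show (a+b+2) - (b+1) = a + 1 from by omega,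
        show 2*(a+1) = 2*a + 2 from by omega,
        show 2*(a+b+2) - 1 - 2*(b+1) = 2*a + 1 from by omega,
        show (a+b+2) - 1 - (b+1) = a from by omega,
        show 2*(a+b+2) = 2*(b+a+2) from by ring]
    exact keyNat a b

/-- For every integer `m ≥ 1` and every real `t`,
`Σ_{q=0}^{m} α^{(2m,t)}_{2m−2q} · t^{m−q} · C_{m−q} · (m−q+1)(m−q) = 2·m·t^m`,
where `α^{(2m,t)}_{2m−2q}` is the coefficient of `X^{2m−2q}` in `P_{2m}^{(t)}` and
`C_j` is the `j`-th Catalan number. -/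
theorem stmt_11 (m : ℕ) (hm : 1 ≤ m) (t : ℝ) :
    ∑ q ∈ Finset.range (m + 1),
        (modCheb t (2 * m)).coeff (2 * m - 2 * q) * t ^ (m - q) * (catalan (m - q) : ℝ) *
          ((m - q + 1 : ℝ) * (m - q : ℝ))
      = 2 * m * t ^ m := by
  have hterm : ∀ q ∈ Finset.range (m + 1),
      (modCheb t (2 * m)).coeff (2 * m - 2 * q) * t ^ (m - q) * (catalan (m - q) : ℝ) *
          ((m - q + 1 : ℝ) * (m - q : ℝ))
        = 2 * (m : ℝ) * t ^ m *
            ((-1 : ℝ) ^ q * (Nat.choose (2*m - 1 - q) q : ℝ) *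
              (Nat.choose (2*m - 1 - 2*q) (m - 1 - q) : ℝ)) := by
    intro q hq
    rw [Finset.mem_range] at hq
    rw [modCheb_coeff t m q hm (by omega)]
    rcases eq_or_lt_of_le (show q ≤ m from by omega) with rfl | hqm
    · rw [show 2*q - 1 - q = q - 1 from by omega,
          Nat.choose_eq_zero_of_lt (show q - 1 < q from by omega)]
      push_cast
      ring
    · have hcast : (m : ℝ) - (q : ℝ) = ((m - q : ℕ) : ℝ) := by
        rw [Nat.cast_sub (by omega)]
      rw [hcast]
      have hc := hcat (m - q)
      have hk : ((Nat.choose (2*m - q) q : ℝ) +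
            (if q = 0 then 0 else (Nat.choose (2*m - 1 - q) (q - 1) : ℝ))) *
            (((m - q : ℕ) : ℝ) * (Nat.choose (2*(m - q)) (m - q) : ℝ))
          = 2*(m:ℝ) * ((Nat.choose (2*m - 1 - q) q : ℝ) *
              (Nat.choose (2*m - 1 - 2*q) (m - 1 - q) : ℝ)) := by
        have := congrArg (Nat.cast : ℕ → ℝ) (hkeyNat m q hm hqm)
        push_cast at this
        convert this using 3
      have hp : t ^ q * t ^ (m - q) = t ^ m := by
        rw [← pow_add]
        congr 1
        omega
      set S := (Nat.choose (2*m - q) q : ℝ) +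
          (if q = 0 then 0 else (Nat.choose (2*m - 1 - q) (q - 1) : ℝ)) with hS
      set K := (catalan (m - q) : ℝ)
      set J := ((m - q : ℕ) : ℝ)
      set CB := (Nat.choose (2*(m - q)) (m - q) : ℝ)
      set C3 := (Nat.choose (2*m - 1 - q) q : ℝ)
      set C4 := (Nat.choose (2*m - 1 - 2*q) (m - 1 - q) : ℝ)
      linear_combination ((-1:ℝ)^q * S * J * (t ^ q * t ^ (m - q))) * hc
        + ((-1:ℝ)^q * S * CB * J) * hp + ((-1:ℝ)^q * t^m) * hk
  rw [Finset.sum_congr rfl hterm, ← Finset.mul_sum]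
  have hS : (∑ q ∈ Finset.range (m + 1),
      ((-1 : ℝ) ^ q * (Nat.choose (2*m - 1 - q) q : ℝ) *
        (Nat.choose (2*m - 1 - 2*q) (m - 1 - q) : ℝ))) = 1 := by
    rw [Finset.sum_range_succ]
    rw [show 2*m - 1 - m = m - 1 from by omega, Nat.choose_eq_zero_of_lt (by omega)]
    push_cast
    rw [mul_zero, zero_mul, add_zero]
    exact scalar_id m hm
  rw [hS, mul_one]
end

section
/- Let t ∈ (0,1] and let k₁, k₂ ≥ 1 be integers. Then Σ_{r=0}^{k₁} Σ_{s=0}^{k₂} α^{(2k₁,t)}_{2k₁−2r} · α^{(2k₂,t)}_{2k₂−2s} · Σ_{l=1}^{min(k₁−r, k₂−s)} 2l · binom(2(k₁−r), k₁−r−l) · binom(2(k₂−s), k₂−s−l) · t^{(k₁−r)+(k₂−s)−2l} equals 2k₁ if k₁ = k₂, and equals 0 if k₁ ≠ k₂. -/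
open Polynomial

/-!
Substituting `X ↦ z + t z⁻¹` gives `P_n(z + t z⁻¹) = z ^ n + t ^ n z ^ (-n)`. As the coefficient
of `z ^ (2l)` in `(z + t z⁻¹) ^ (2a)` is `binom(2a, a - l) t ^ (a - l)`, comparing coefficients of
`z ^ (2l)` for `n = 2k` gives `Σ_r α_{2k-2r} binom(2(k-r), k-r-l) t ^ (k-r-l) = δ_{l,k}` for
`l ≥ 1`. Splitting `t ^ (a + b - 2l) = t ^ (a - l) t ^ (b - l)`, the triple sum factors and
collapses to `Σ_{l ≥ 1} 2l δ_{l,k₁} δ_{l,k₂}`.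
-/

theorem Finset.sum_range_two_mul_add_one {M : Type*} [AddCommMonoid M] (f : ℕ → M) (n : ℕ) :
    ∑ i ∈ range (2 * n + 1), f i =
      ∑ a ∈ range (n + 1), f (2 * a) + ∑ a ∈ range n, f (2 * a + 1) := by
  induction n with
  | zero => simp
  | succ n ih =>
    rw [show 2 * (n + 1) + 1 = 2 * n + 1 + 1 + 1 by ring, sum_range_succ, sum_range_succ, ih,
      sum_range_succ (fun a => f (2 * a)) (n + 1), sum_range_succ (fun a => f (2 * a + 1)) n,
      show 2 * (n + 1) = 2 * n + 1 + 1 by ring]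
    abel

open LaurentPolynomial

namespace LaurentPolynomial

variable {R : Type*} [CommRing R]

noncomputable def joukowski (t : R) : R[T;T⁻¹] := T 1 + t • T (-1)

theorem joukowski_mul_T_add_smul_T_neg (t a : R) (m : ℤ) :
    joukowski t * (T (m + 1) + (a * t) • T (-(m + 1))) =
      (T (m + 2) + (a * t * t) • T (-(m + 2))) + t • (T m + a • T (-m)) := by
  simp only [joukowski, add_mul, mul_add, mul_smul_comm, smul_mul_assoc, ← T_add]
  ring_nf
  module

theorem joukowski_pow (t : R) (i : ℕ) :
    joukowski t ^ i =
      ∑ j ∈ Finset.range (i + 1), (i.choose j * t ^ (i - j)) • T (2 * j - i) := by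
  rw [joukowski, add_pow]
  refine Finset.sum_congr rfl fun j hj => ?_
  have hT : (T (2 * j - i) : R[T;T⁻¹]) = T (j * 1) * T ((i - j : ℕ) * -1) := by
    rw [← T_add]
    push_cast [Nat.lt_succ_iff.mp (Finset.mem_range.mp hj)]
    ring_nf
  rw [_root_.smul_pow, T_pow, T_pow, hT]
  simp only [Algebra.smul_def, map_mul, map_natCast, map_pow]
  ring

theorem coeff_joukowski_pow (t : R) (i : ℕ) (m : ℤ) :
    (joukowski t ^ i).coeff m =
      ∑ j ∈ Finset.range (i + 1), if 2 * j - i = m then (i.choose j : R) * t ^ (i - j) else 0 := by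
  simp [joukowski_pow, Finsupp.finsetSum_apply]

theorem coeff_joukowski_pow_two_mul (t : R) (a l : ℕ) :
    (joukowski t ^ (2 * a)).coeff (2 * l) =
      if l ≤ a then ((2 * a).choose (a - l) : R) * t ^ (a - l) else 0 := by
  have hj : ∀ j : ℕ, 2 * j - (2 * a : ℕ) = (2 * l : ℤ) ↔ j = a + l := fun j => by
    push_cast
    omega
  simp only [coeff_joukowski_pow, hj, Finset.sum_ite_eq', Finset.mem_range]
  by_cases hla : l ≤ a
  · rw [if_pos (by omega), if_pos hla,
      ← Nat.choose_symm_of_eq_add (by omega : 2 * a = (a + l) + (a - l))]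
    congr 2
    omega
  · rw [if_neg (by omega), if_neg hla]

theorem coeff_joukowski_pow_two_mul_add_one (t : R) (a l : ℕ) :
    (joukowski t ^ (2 * a + 1)).coeff (2 * l) = 0 := by
  rw [coeff_joukowski_pow]
  exact Finset.sum_eq_zero fun j _ => if_neg (by push_cast; omega)

theorem sum_Icc_choose_mul_choose_eq_sum_coeff_joukowski_pow (t : R) {a n : ℕ} (b : ℕ)
    (ha : a ≤ n) :
    ∑ l ∈ Finset.Icc 1 (min a b),
        (2 * l : R) * ((2 * a).choose (a - l) : R) * ((2 * b).choose (b - l) : R) *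
          t ^ (a + b - 2 * l) =
      ∑ l ∈ Finset.Icc 1 n,
        (2 * l : R) * (joukowski t ^ (2 * a)).coeff (2 * l) *
          (joukowski t ^ (2 * b)).coeff (2 * l) := by
  refine (Finset.sum_congr rfl fun l hl => ?_).trans
    (Finset.sum_subset (fun l hl => ?_) fun l hl hl' => ?_)
  · obtain ⟨-, hla, hlb⟩ : 1 ≤ l ∧ l ≤ a ∧ l ≤ b := by simpa using hl
    rw [coeff_joukowski_pow_two_mul, coeff_joukowski_pow_two_mul, if_pos hla, if_pos hlb,
      show a + b - 2 * l = (a - l) + (b - l) by omega, pow_add]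
    ring
  · simp only [Finset.mem_Icc] at hl ⊢
    omega
  · have hout : ¬l ≤ a ∨ ¬l ≤ b := by
      simp only [Finset.mem_Icc] at hl hl'
      omega
    rcases hout with hout | hout <;> simp [coeff_joukowski_pow_two_mul, hout]

end LaurentPolynomial

theorem aeval_joukowski_modCheb (t : ℝ) :
    ∀ n : ℕ, aeval (joukowski t) (modCheb t n) = T n + t ^ n • T (-n)
  | 0 => by norm_num [modCheb, T_zero, map_ofNat]
  | 1 => by simp [modCheb, joukowski]
  | n + 2 => by
    rw [modCheb, map_sub, map_mul, map_mul, aeval_X, aeval_C, aeval_joukowski_modCheb t (n + 1),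
      aeval_joukowski_modCheb t n, ← Algebra.smul_def, pow_succ, pow_succ, pow_succ]
    push_cast
    rw [joukowski_mul_T_add_smul_T_neg]
    ring_nf

theorem modCheb_natDegree_le (t : ℝ) : ∀ n, (modCheb t n).natDegree ≤ n
  | 0 => by simp [modCheb]
  | 1 => by simp [modCheb]
  | n + 2 => by
    rw [modCheb]
    refine (natDegree_sub_le _ _).trans (max_le ?_ ?_)
    · exact natDegree_mul_le.trans (by simpa [add_comm 1] using modCheb_natDegree_le t (n + 1))
    · exact natDegree_mul_le.trans (by simpa using (modCheb_natDegree_le t n).trans (by omega))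

theorem sum_coeff_modCheb_mul_coeff_joukowski_pow (t : ℝ) (k : ℕ) {l : ℕ} (hl : 0 < l) :
    ∑ r ∈ Finset.range (k + 1),
        (modCheb t (2 * k)).coeff (2 * k - 2 * r) * (joukowski t ^ (2 * (k - r))).coeff (2 * l) =
      if l = k then 1 else 0 := by
  set p := modCheb t (2 * k)
  have hdeg : p.natDegree < 2 * k + 1 := (modCheb_natDegree_le t _).trans_lt (lt_add_one _)
  calc _ = ∑ a ∈ Finset.range (k + 1), p.coeff (2 * a) * (joukowski t ^ (2 * a)).coeff (2 * l) := by
        rw [← Finset.sum_range_reflect]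
        refine Finset.sum_congr rfl fun r hr => ?_
        have hrk := Finset.mem_range.mp hr
        rw [show k + 1 - 1 - r = k - r by omega, show 2 * k - 2 * (k - r) = 2 * r by omega,
          show k - (k - r) = r by omega]
    _ = ∑ i ∈ Finset.range (2 * k + 1), p.coeff i * (joukowski t ^ i).coeff (2 * l) := by
        simp [Finset.sum_range_two_mul_add_one, coeff_joukowski_pow_two_mul_add_one]
    _ = (aeval (joukowski t) p).coeff (2 * l) := by
        simp [aeval_eq_sum_range' hdeg, Finsupp.finsetSum_apply]
    _ = if l = k then 1 else 0 := by
        have hneg : -(2 * (k : ℤ)) ≠ 2 * l := by omega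
        simp [p, aeval_joukowski_modCheb, hneg, eq_comm]

theorem stmt_18_general (t : ℝ) (k₁ k₂ : ℕ) :
    ∑ r ∈ Finset.range (k₁ + 1), ∑ s ∈ Finset.range (k₂ + 1),
        (modCheb t (2 * k₁)).coeff (2 * k₁ - 2 * r) *
          (modCheb t (2 * k₂)).coeff (2 * k₂ - 2 * s) *
          ∑ l ∈ Finset.Icc 1 (min (k₁ - r) (k₂ - s)),
            (2 * l : ℝ) * ((2 * (k₁ - r)).choose (k₁ - r - l) : ℝ) *
              ((2 * (k₂ - s)).choose (k₂ - s - l) : ℝ) *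
              t ^ ((k₁ - r) + (k₂ - s) - 2 * l)
      = if k₁ = k₂ then (2 * k₁ : ℝ) else 0 := by
  set α : ℕ → ℕ → ℝ := fun k r => (modCheb t (2 * k)).coeff (2 * k - 2 * r)
  set c : ℕ → ℕ → ℝ := fun a l => (joukowski t ^ (2 * a)).coeff (2 * l)
  calc _ = ∑ r ∈ Finset.range (k₁ + 1), ∑ s ∈ Finset.range (k₂ + 1), ∑ l ∈ Finset.Icc 1 k₁,
        α k₁ r * α k₂ s * ((2 * l : ℝ) * c (k₁ - r) l * c (k₂ - s) l) := by
        simp only [sum_Icc_choose_mul_choose_eq_sum_coeff_joukowski_pow t _ (Nat.sub_le k₁ _),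
          Finset.mul_sum, α, c]
    _ = ∑ l ∈ Finset.Icc 1 k₁, (2 * l : ℝ) *
          ((∑ r ∈ Finset.range (k₁ + 1), α k₁ r * c (k₁ - r) l) *
            (∑ s ∈ Finset.range (k₂ + 1), α k₂ s * c (k₂ - s) l)) := by
        rw [Finset.sum_comm_cycle]
        refine Finset.sum_congr rfl fun l _ => ?_
        rw [Finset.sum_mul_sum, Finset.mul_sum]
        refine Finset.sum_congr rfl fun r _ => ?_
        rw [Finset.mul_sum]
        exact Finset.sum_congr rfl fun s _ => by ring
    _ = ∑ l ∈ Finset.Icc 1 k₁,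
          (2 * l : ℝ) * ((if l = k₁ then 1 else 0) * (if l = k₂ then 1 else 0)) := by
        refine Finset.sum_congr rfl fun l hl => ?_
        simp only [α, c, sum_coeff_modCheb_mul_coeff_joukowski_pow t _ (Finset.mem_Icc.mp hl).1]
    _ = _ := by
        split_ifs with hk
        · simp [← hk, Finset.sum_ite_eq']
        · refine Finset.sum_eq_zero fun l _ => ?_
          by_cases hl : l = k₁ <;> simp [hl, hk]

/-- For `t ∈ (0,1]` and integers `k₁, k₂ ≥ 1`,
`Σ_{r,s} α^{(2k₁,t)}_{2k₁−2r} α^{(2k₂,t)}_{2k₂−2s}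
  Σ_{l≥1} 2l·binom(2(k₁−r), k₁−r−l)·binom(2(k₂−s), k₂−s−l)·t^{(k₁−r)+(k₂−s)−2l}`
equals `2k₁` if `k₁ = k₂` and `0` otherwise. -/
theorem stmt_18 (t : ℝ) (ht0 : 0 < t) (ht1 : t ≤ 1) (k₁ k₂ : ℕ) (h₁ : 1 ≤ k₁) (h₂ : 1 ≤ k₂) :
    ∑ r ∈ Finset.range (k₁ + 1), ∑ s ∈ Finset.range (k₂ + 1),
        (modCheb t (2 * k₁)).coeff (2 * k₁ - 2 * r) *
          (modCheb t (2 * k₂)).coeff (2 * k₂ - 2 * s) *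
          ∑ l ∈ Finset.Icc 1 (min (k₁ - r) (k₂ - s)),
            (2 * l : ℝ) * ((2 * (k₁ - r)).choose (k₁ - r - l) : ℝ) *
              ((2 * (k₂ - s)).choose (k₂ - s - l) : ℝ) *
              t ^ ((k₁ - r) + (k₂ - s) - 2 * l)
      = if k₁ = k₂ then (2 * k₁ : ℝ) else 0 :=
  stmt_18_general t k₁ k₂
end

section
/- Let t ∈ (0,1] and let k₁, k₂ ≥ 0 be integers. Then Σ_{r=0}^{k₁} Σ_{s=0}^{k₂} α^{(2k₁+1,t)}_{2k₁+1−2r} · α^{(2k₂+1,t)}_{2k₂+1−2s} · Σ_{l=1}^{min(k₁+1−r, k₂+1−s)} (2l−1) · binom(2(k₁−r)+1, k₁+1−r−l) · binom(2(k₂−s)+1, k₂+1−s−l) · t^{(k₁−r)+(k₂−s)−2l+2} equals 2k₁+1 if k₁ = k₂, and equals 0 if k₁ ≠ k₂. -/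
open Polynomial

/-!
Whenever `z * w = t`, the recurrence gives `P_n(z + w) = zⁿ + wⁿ`, so the binomial theorem
inverts the triangular system relating odd powers and odd `P`'s:
`X^{2m+1} = ∑_j binom(2m+1, m+1+j) t^{m-j} P_{2j+1}`.
Expanding `P_{2k+1}` in monomials and each monomial back in the `P_{2j+1}`, which are
linearly independent (monic of distinct degrees), yields
`∑_r α_r binom(2(k-r)+1, k-r+1+j) t^{k-r-j} = δ_{jk}`.
After the shift `l = j + 1` and the symmetry of binomial coefficients, the power of `t` in the
double sum splits as `t^{k₁-r-j} t^{k₂-s-j}`, so the sum factors through this identity and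
collapses to `(2k₁+1) δ_{k₁k₂}`.
-/

open Finset

lemma add_pow_two_mul_add_one {R : Type*} [CommSemiring R] (z w : R) (m : ℕ) :
    (z + w) ^ (2 * m + 1) = ∑ j ∈ range (m + 1),
      ((2 * m + 1).choose (m + 1 + j) : R) * (z * w) ^ (m - j) *
        (z ^ (2 * j + 1) + w ^ (2 * j + 1)) := by
  rw [add_pow, show 2 * m + 1 + 1 = (m + 1) + (m + 1) by ring, sum_range_add,
    ← sum_range_reflect, ← sum_add_distrib]
  refine sum_congr rfl fun j hj => ?_
  have hj : j ≤ m := Nat.lt_succ_iff.mp (mem_range.mp hj)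
  have hsymm : (2 * m + 1).choose (m - j) = (2 * m + 1).choose (m + 1 + j) :=
    Nat.choose_symm_of_eq_add (by omega)
  rw [show m + 1 - 1 - j = m - j by omega, hsymm, show 2 * m + 1 - (m - j) = m + 1 + j by omega,
    show 2 * m + 1 - (m + 1 + j) = m - j by omega, show m + 1 + j = m - j + (2 * j + 1) by omega]
  ring

lemma sum_range_two_mul {M : Type*} [AddCommMonoid M] (f : ℕ → M) (n : ℕ) :
    ∑ i ∈ range (2 * n), f i = ∑ i ∈ range n, (f (2 * i) + f (2 * i + 1)) := by
  induction n with
  | zero => simp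
  | succ n ih =>
    rw [show 2 * (n + 1) = 2 * n + 1 + 1 by ring, sum_range_succ, sum_range_succ, ih,
      sum_range_succ, add_assoc]

lemma sum_sum_mul_sum_comm {ι κ ν R : Type*} [CommSemiring R] (s : Finset ι)
    (s' : Finset κ) (u : Finset ν) (a : ι → R) (b : κ → R) (w : ν → R) (f : ι → ν → R)
    (g : κ → ν → R) :
    ∑ r ∈ s, ∑ q ∈ s', a r * b q * ∑ j ∈ u, w j * f r j * g q j
      = ∑ j ∈ u, w j * (∑ r ∈ s, a r * f r j) * (∑ q ∈ s', b q * g q j) := by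
  have hdistrib : ∀ j, w j * (∑ r ∈ s, a r * f r j) * (∑ q ∈ s', b q * g q j)
      = ∑ r ∈ s, ∑ q ∈ s', a r * b q * (w j * f r j * g q j) := fun j => by
    rw [mul_assoc, sum_mul_sum, mul_sum]
    refine sum_congr rfl fun r _ => ?_
    rw [mul_sum]
    exact sum_congr rfl fun q _ => by ring
  simp only [hdistrib]
  conv_rhs => rw [sum_comm]
  refine sum_congr rfl fun r _ => ?_
  simp only [mul_sum]
  exact sum_comm

lemma eq_zero_of_sum_C_mul_eq_zero {R : Type*} [Semiring R] {p : ℕ → R[X]} {d : ℕ → ℕ}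
    (hd : StrictMono d) (hdeg : ∀ i, (p i).natDegree ≤ d i)
    (hlead : ∀ i, (p i).coeff (d i) = 1) {a : ℕ → R} {n : ℕ}
    (h : ∑ i ∈ range n, C (a i) * p i = 0) : ∀ i < n, a i = 0 := by
  induction n with
  | zero => simp
  | succ n ih =>
    have han : a n = 0 := by
      have hcoeff := congrArg (coeff · (d n)) h
      have hlow : ∀ i ∈ range n, a i * (p i).coeff (d n) = 0 := fun i hi => by
        rw [coeff_eq_zero_of_natDegree_lt ((hdeg i).trans_lt (hd (mem_range.1 hi))), mul_zero]
      simpa [finsetSum_coeff, sum_range_succ, sum_eq_zero hlow, hlead] using hcoeff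
    rw [sum_range_succ, han, C_0, zero_mul, add_zero] at h
    intro i hi
    rcases Nat.lt_succ_iff_lt_or_eq.1 hi with hi | rfl
    · exact ih h i hi
    · exact han

lemma exists_mul_eq_add_eq {t x : ℝ} (h : 4 * t ≤ x ^ 2) :
    ∃ z w : ℝ, z * w = t ∧ z + w = x := by
  obtain ⟨s, hs⟩ : ∃ s : ℝ, s ^ 2 = x ^ 2 - 4 * t :=
    ⟨√(x ^ 2 - 4 * t), Real.sq_sqrt (by linarith)⟩
  exact ⟨(x + s) / 2, (x - s) / 2, by linear_combination -hs / 4, by ring⟩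

lemma eq_of_eval_add_eq_of_mul_eq (t : ℝ) {p q : ℝ[X]}
    (h : ∀ z w : ℝ, z * w = t → p.eval (z + w) = q.eval (z + w)) : p = q := by
  refine eq_of_infinite_eval_eq p q ((Set.Ici_infinite (|t| + 1)).mono fun x hx => ?_)
  have hx : |t| + 1 ≤ x := hx
  obtain ⟨z, w, hzw, rfl⟩ := exists_mul_eq_add_eq (t := t) (x := x)
    (by nlinarith [le_abs_self t, abs_nonneg t, sq_nonneg (|t| - 1)])
  exact h z w hzw

section

variable (t : ℝ)

@[simp] lemma modCheb_zero : modCheb t 0 = 2 := by rw [modCheb]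

@[simp] lemma modCheb_one : modCheb t 1 = X := by rw [modCheb]

lemma modCheb_add_two (k : ℕ) :
    modCheb t (k + 2) = X * modCheb t (k + 1) - C t * modCheb t k := by rw [modCheb]

lemma natDegree_modCheb_le (n : ℕ) : (modCheb t n).natDegree ≤ n := by
  induction n using modCheb.induct with
  | case1 => simp
  | case2 => simp
  | case3 k ih₁ ih₀ =>
    rw [modCheb_add_two]
    refine (natDegree_sub_le _ _).trans (max_le ?_ ?_)
    · exact (natDegree_mul_le_of_le natDegree_X_le ih₁).trans (by omega)
    · exact (natDegree_C_mul_le t _).trans (by omega)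

lemma coeff_modCheb_self_add_one (n : ℕ) : (modCheb t (n + 1)).coeff (n + 1) = 1 := by
  induction n with
  | zero => simp
  | succ n ih =>
    rw [modCheb_add_two, coeff_sub, coeff_X_mul, ih, coeff_C_mul,
      coeff_eq_zero_of_natDegree_lt ((natDegree_modCheb_le t n).trans_lt (by omega))]
    ring

lemma coeff_modCheb_eq_zero_of_odd {n i : ℕ} (h : Odd (n + i)) : (modCheb t n).coeff i = 0 := by
  induction n using modCheb.induct generalizing i with
  | case1 =>
    rw [modCheb_zero, ← C_ofNat, coeff_C, if_neg]
    rintro rfl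
    simp [Nat.odd_iff] at h
  | case2 =>
    rw [modCheb_one, coeff_X, if_neg]
    rintro rfl
    simp [Nat.odd_iff] at h
  | case3 k ih₁ ih₀ =>
    rw [Nat.odd_iff] at h
    rw [modCheb_add_two, coeff_sub, coeff_C_mul, ih₀ (Nat.odd_iff.mpr (by omega)), mul_zero,
      sub_zero]
    cases i with
    | zero => exact coeff_X_mul_zero _
    | succ j => rw [coeff_X_mul, ih₁ (Nat.odd_iff.mpr (by omega))]

lemma eval_modCheb_add {z w : ℝ} (h : z * w = t) (n : ℕ) :
    (modCheb t n).eval (z + w) = z ^ n + w ^ n := by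
  induction n using modCheb.induct with
  | case1 => norm_num
  | case2 => simp
  | case3 k ih₁ ih₀ =>
    rw [modCheb_add_two, eval_sub, eval_mul, eval_mul, eval_X, eval_C, ih₁, ih₀, ← h]
    simp only [Nat.succ_eq_add_one]
    ring

lemma modCheb_odd_eq_sum (k : ℕ) :
    modCheb t (2 * k + 1) = ∑ r ∈ range (k + 1),
      C ((modCheb t (2 * k + 1)).coeff (2 * k + 1 - 2 * r)) * X ^ (2 * (k - r) + 1) := by
  conv_lhs => rw [as_sum_range_C_mul_X_pow' (modCheb t (2 * k + 1)) (n := 2 * (k + 1))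
    ((natDegree_modCheb_le t _).trans_lt (by omega)), sum_range_two_mul]
  rw [← sum_range_reflect]
  refine sum_congr rfl fun r hr => ?_
  have hr : r ≤ k := Nat.lt_succ_iff.mp (mem_range.mp hr)
  rw [coeff_modCheb_eq_zero_of_odd t (Nat.odd_iff.mpr (by omega)), C_0, zero_mul, zero_add,
    show 2 * (k + 1 - 1 - r) + 1 = 2 * k + 1 - 2 * r by omega,
    show 2 * (k - r) + 1 = 2 * k + 1 - 2 * r by omega]

/-- The truncated exponent `m - j` is harmless: for `j > m` the binomial coefficient is `0`. -/
noncomputable def oddPowCoeff (m j : ℕ) : ℝ :=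
  ((2 * m + 1).choose (m + 1 + j) : ℝ) * t ^ (m - j)

lemma oddPowCoeff_eq_zero {m j : ℕ} (h : m < j) : oddPowCoeff t m j = 0 := by
  rw [oddPowCoeff, Nat.choose_eq_zero_of_lt (by omega), Nat.cast_zero, zero_mul]

lemma X_pow_odd_eq_sum {m n : ℕ} (hmn : m < n) :
    (X : ℝ[X]) ^ (2 * m + 1) =
      ∑ j ∈ range n, C (oddPowCoeff t m j) * modCheb t (2 * j + 1) := by
  rw [← sum_subset (range_subset_range.2 hmn) fun j _ hj => by
    rw [oddPowCoeff_eq_zero t (by simpa using hj), C_0, zero_mul]]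
  refine eq_of_eval_add_eq_of_mul_eq t fun z w hzw => ?_
  rw [eval_pow, eval_X, add_pow_two_mul_add_one, eval_finsetSum]
  refine sum_congr rfl fun j _ => ?_
  rw [eval_mul, eval_C, eval_modCheb_add t hzw, oddPowCoeff, hzw]

lemma sum_coeff_modCheb_mul_oddPowCoeff (k j : ℕ) :
    ∑ r ∈ range (k + 1),
        (modCheb t (2 * k + 1)).coeff (2 * k + 1 - 2 * r) * oddPowCoeff t (k - r) j
      = if j = k then 1 else 0 := by
  rcases lt_or_ge k j with hkj | hjk
  · rw [if_neg hkj.ne']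
    exact sum_eq_zero fun r _ => by rw [oddPowCoeff_eq_zero t (by omega), mul_zero]
  set a : ℕ → ℝ := fun i => ∑ r ∈ range (k + 1),
    (modCheb t (2 * k + 1)).coeff (2 * k + 1 - 2 * r) * oddPowCoeff t (k - r) i
  have hexpand :
      modCheb t (2 * k + 1) = ∑ i ∈ range (k + 1), C (a i) * modCheb t (2 * i + 1) := by
    conv_lhs => rw [modCheb_odd_eq_sum]
    rw [sum_congr rfl fun r hr => by
      rw [X_pow_odd_eq_sum t (m := k - r) (n := k + 1) (by omega), mul_sum]]
    rw [sum_comm]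
    simp only [a, map_sum, sum_mul, C_mul, mul_assoc]
  have hself : modCheb t (2 * k + 1) =
      ∑ i ∈ range (k + 1), C (if i = k then 1 else 0) * modCheb t (2 * i + 1) := by
    simp
  have hdiff :
      ∑ i ∈ range (k + 1), C (a i - if i = k then 1 else 0) * modCheb t (2 * i + 1) = 0 := by
    simp only [map_sub, sub_mul, sum_sub_distrib, ← hexpand, ← hself, sub_self]
  exact sub_eq_zero.1 <| eq_zero_of_sum_C_mul_eq_zero (p := fun i => modCheb t (2 * i + 1))
    (d := fun i => 2 * i + 1) (fun i j hij => by simp only; omega)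
    (fun i => natDegree_modCheb_le t _) (fun i => coeff_modCheb_self_add_one t (2 * i)) hdiff j
    (by omega)

end

lemma sum_Icc_choose_mul_choose_eq_sum_oddPowCoeff (t : ℝ) (m₁ m₂ : ℕ) {n : ℕ}
    (hn : m₁ < n) :
    ∑ l ∈ Icc 1 (min (m₁ + 1) (m₂ + 1)),
        (2 * l - 1 : ℝ) * ((2 * m₁ + 1).choose (m₁ + 1 - l) : ℝ) *
          ((2 * m₂ + 1).choose (m₂ + 1 - l) : ℝ) * t ^ (m₁ + m₂ + 2 - 2 * l)
      = ∑ j ∈ range n, (2 * j + 1 : ℝ) * oddPowCoeff t m₁ j * oddPowCoeff t m₂ j := by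
  calc _ = ∑ j ∈ range (min m₁ m₂ + 1),
        (2 * j + 1 : ℝ) * oddPowCoeff t m₁ j * oddPowCoeff t m₂ j := by
        rw [← Ico_add_one_right_eq_Icc, sum_Ico_eq_sum_range,
          show min (m₁ + 1) (m₂ + 1) + 1 - 1 = min m₁ m₂ + 1 by omega]
        refine sum_congr rfl fun j hj => ?_
        have hj : j ≤ m₁ ∧ j ≤ m₂ := by simp at hj; omega
        rw [Nat.choose_symm_of_eq_add
            (by omega : 2 * m₁ + 1 = (m₁ + 1 - (1 + j)) + (m₁ + 1 + j)),
          Nat.choose_symm_of_eq_add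
            (by omega : 2 * m₂ + 1 = (m₂ + 1 - (1 + j)) + (m₂ + 1 + j)),
          show m₁ + m₂ + 2 - 2 * (1 + j) = (m₁ - j) + (m₂ - j) by omega, pow_add, oddPowCoeff,
          oddPowCoeff]
        push_cast
        ring
    _ = _ := by
        refine sum_subset (range_subset_range.2 (by omega)) fun j _ hj => ?_
        rcases Nat.lt_or_ge m₁ j with h | h
        · rw [oddPowCoeff_eq_zero t h, mul_zero, zero_mul]
        · rw [oddPowCoeff_eq_zero t (m := m₂) (by simp at hj; omega), mul_zero]

theorem stmt_19_general (t : ℝ) (k₁ k₂ : ℕ) :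
    ∑ r ∈ Finset.range (k₁ + 1), ∑ s ∈ Finset.range (k₂ + 1),
        (modCheb t (2 * k₁ + 1)).coeff (2 * k₁ + 1 - 2 * r) *
          (modCheb t (2 * k₂ + 1)).coeff (2 * k₂ + 1 - 2 * s) *
          ∑ l ∈ Finset.Icc 1 (min (k₁ + 1 - r) (k₂ + 1 - s)),
            (2 * l - 1 : ℝ) * ((2 * (k₁ - r) + 1).choose (k₁ + 1 - r - l) : ℝ) *
              ((2 * (k₂ - s) + 1).choose (k₂ + 1 - s - l) : ℝ) *
              t ^ ((k₁ - r) + (k₂ - s) + 2 - 2 * l)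
      = if k₁ = k₂ then (2 * k₁ + 1 : ℝ) else 0 := by
  calc _ = ∑ r ∈ range (k₁ + 1), ∑ s ∈ range (k₂ + 1),
        (modCheb t (2 * k₁ + 1)).coeff (2 * k₁ + 1 - 2 * r) *
          (modCheb t (2 * k₂ + 1)).coeff (2 * k₂ + 1 - 2 * s) *
          ∑ j ∈ range (k₁ + 1),
            (2 * j + 1 : ℝ) * oddPowCoeff t (k₁ - r) j * oddPowCoeff t (k₂ - s) j := by
        refine sum_congr rfl fun r hr => sum_congr rfl fun s hs => ?_
        simp only [mem_range] at hr hs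
        rw [show k₁ + 1 - r = k₁ - r + 1 by omega, show k₂ + 1 - s = k₂ - s + 1 by omega,
          sum_Icc_choose_mul_choose_eq_sum_oddPowCoeff t _ _ (n := k₁ + 1) (by omega)]
    _ = ∑ j ∈ range (k₁ + 1),
          (2 * j + 1 : ℝ) * (if j = k₁ then 1 else 0) * (if j = k₂ then 1 else 0) := by
        simp only [sum_sum_mul_sum_comm, sum_coeff_modCheb_mul_oddPowCoeff]
    _ = _ := by
        rcases eq_or_ne k₁ k₂ with rfl | h
        · rw [sum_eq_single k₁ (fun j _ hj => by simp [hj]) (by simp)]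
          simp
        · rw [if_neg h]
          refine sum_eq_zero fun j _ => ?_
          by_cases hj : j = k₁ <;> simp [hj, h]

/-- For `t ∈ (0,1]` and integers `k₁, k₂ ≥ 0`,
`Σ_{r,s} α^{(2k₁+1,t)}_{2k₁+1−2r} α^{(2k₂+1,t)}_{2k₂+1−2s}
  Σ_{l≥1} (2l−1)·binom(2(k₁−r)+1, k₁+1−r−l)·binom(2(k₂−s)+1, k₂+1−s−l)·t^{(k₁−r)+(k₂−s)−2l+2}`
equals `2k₁+1` if `k₁ = k₂` and `0` otherwise. -/
theorem stmt_19 (t : ℝ) (ht0 : 0 < t) (ht1 : t ≤ 1) (k₁ k₂ : ℕ) :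
    ∑ r ∈ Finset.range (k₁ + 1), ∑ s ∈ Finset.range (k₂ + 1),
        (modCheb t (2 * k₁ + 1)).coeff (2 * k₁ + 1 - 2 * r) *
          (modCheb t (2 * k₂ + 1)).coeff (2 * k₂ + 1 - 2 * s) *
          ∑ l ∈ Finset.Icc 1 (min (k₁ + 1 - r) (k₂ + 1 - s)),
            (2 * l - 1 : ℝ) * ((2 * (k₁ - r) + 1).choose (k₁ + 1 - r - l) : ℝ) *
              ((2 * (k₂ - s) + 1).choose (k₂ + 1 - s - l) : ℝ) *
              t ^ ((k₁ - r) + (k₂ - s) + 2 - 2 * l)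
      = if k₁ = k₂ then (2 * k₁ + 1 : ℝ) else 0 :=
  stmt_19_general t k₁ k₂
end
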